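/- Let m >= 2 and fix 1 <= i < j <= m. For a positive integer q, let M(q) be the set of tuples (x_1,...,x_m) in Z_q^m such that: x_i = 2 and x_j = -1; x_s != 0 and x_s != 1 for all s; x_s != x_t for all s != t; x_s != x_t + 1 for all s < t; and x_s != -x_t and x_s != -x_t + 1 for all s != t with {s,t} != {i,j}. Then there exists a positive integer N such that for every integer q >= N (of either parity), |M(q)| = (q - 2m)^(i-1) * (q - 2m + 1)^(m-i-1). -/

import Mathlib

namespace ShiFlat

variable (m I J q : ℕ)

def Free (s : Fin m) : Prop := s.val ≠ I ∧ s.val ≠ J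

instance : DecidablePred (Free m I J) := fun s => by unfold Free; infer_instance

/-- lexicographic key encoding (label, within-bucket order). -/
def key (c : Fin m → ℕ) (s : Fin m) : ℕ :=
  (m + 1) * c s + (if c s % 2 = 0 then s.val else m - 1 - s.val)

def Pred (c : Fin m → ℕ) (t s : Fin m) : Prop :=
  Free m I J t ∧ key m c t < key m c s

instance (c : Fin m → ℕ) (s : Fin m) : DecidablePred (fun t => Pred m I J c t s) :=
  fun t => by unfold Pred; infer_instance

def gb (c : Fin m → ℕ) (s : Fin m) : ℕ := (c s + 1) / 2

def rank (c : Fin m → ℕ) (s : Fin m) : ℕ :=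
  (Finset.univ.filter fun t => Pred m I J c t s).card

def vtx (c : Fin m → ℕ) (s : Fin m) : ℕ := 2 + gb m c s + rank m I J c s

def Xval (c : Fin m → ℕ) (s : Fin m) : ℕ :=
  if c s % 2 = 0 then vtx m I J c s + 1 else q - vtx m I J c s

def phi (c : Fin m → ℕ) : Fin m → ZMod q := fun s =>
  if s.val = I then 2 else if s.val = J then -1 else ((Xval m I J q c s : ℕ) : ZMod q)

section Basic

variable {m I J q : ℕ} {c : Fin m → ℕ}

lemma key_lt_of_label_lt {t s : Fin m} (h : c t < c s) : key m c t < key m c s := by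
  unfold key
  have hs' : (m + 1) * c t + (m + 1) ≤ (m + 1) * c s := by
    have h' : (m + 1) * (c t + 1) ≤ (m + 1) * c s := Nat.mul_le_mul_left _ (by omega)
    rw [Nat.mul_succ] at h'
    exact h'
  have ht : (if c t % 2 = 0 then t.val else m - 1 - t.val) ≤ m := by
    have := t.isLt; split <;> omega
  omega

lemma key_inj {t s : Fin m} (h : key m c t = key m c s) : t = s := by
  by_cases hc : c t = c s
  · unfold key at h
    rw [hc] at h
    have h' : (if c s % 2 = 0 then t.val else m - 1 - t.val)
        = (if c s % 2 = 0 then s.val else m - 1 - s.val) := by omega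
    have ht := t.isLt; have hs := s.isLt
    apply Fin.ext
    split at h' <;> omega
  · rcases Nat.lt_or_ge (c t) (c s) with h1 | h1
    · exact absurd h (Nat.ne_of_lt (key_lt_of_label_lt h1))
    · have h1 : c s < c t := by omega
      exact absurd h.symm (Nat.ne_of_lt (key_lt_of_label_lt h1))

lemma label_le_of_key_lt {t s : Fin m} (h : key m c t < key m c s) : c t ≤ c s := by
  by_contra hc
  exact absurd (key_lt_of_label_lt (show c s < c t by omega)) (by omega)

lemma key_lt_same_label {t s : Fin m} (hc : c t = c s) :
    key m c t < key m c s ↔ ((c s % 2 = 0 ∧ t < s) ∨ (c s % 2 ≠ 0 ∧ s < t)) := by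
  unfold key
  rw [hc]
  have ht := t.isLt; have hs := s.isLt
  by_cases h2 : c s % 2 = 0
  · rw [if_pos h2, if_pos h2]
    constructor
    · intro h
      exact Or.inl ⟨h2, Fin.lt_def.mpr (by omega)⟩
    · rintro (⟨-, h⟩ | ⟨h', -⟩)
      · have := Fin.lt_def.mp h; omega
      · omega
  · rw [if_neg h2, if_neg h2]
    constructor
    · intro h
      exact Or.inr ⟨h2, Fin.lt_def.mpr (by omega)⟩
    · rintro (⟨h', -⟩ | ⟨-, h⟩)
      · omega
      · have := Fin.lt_def.mp h; omega

lemma pred_total {s t : Fin m} (ht : Free m I J t) (hs : Free m I J s) (hst : t ≠ s) :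
    Pred m I J c t s ∨ Pred m I J c s t := by
  rcases Nat.lt_trichotomy (key m c t) (key m c s) with h | h | h
  · exact Or.inl ⟨ht, h⟩
  · exact absurd (key_inj h) hst
  · exact Or.inr ⟨hs, h⟩

lemma rank_lt_of_pred {s t : Fin m} (h : Pred m I J c t s) :
    rank m I J c t < rank m I J c s := by
  apply Finset.card_lt_card
  constructor
  · intro u hu
    simp only [Finset.mem_filter, Finset.mem_univ, true_and] at hu ⊢
    exact ⟨hu.1, hu.2.trans h.2⟩
  · intro hsub
    have := hsub (Finset.mem_filter.mpr ⟨Finset.mem_univ t, h⟩)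
    exact absurd (Finset.mem_filter.mp this).2.2 (lt_irrefl _)

lemma vtx_lt_of_pred {s t : Fin m} (h : Pred m I J c t s) :
    vtx m I J c t < vtx m I J c s := by
  have h1 := rank_lt_of_pred h
  have h2 : c t ≤ c s := label_le_of_key_lt h.2
  have h3 : gb m c t ≤ gb m c s := by unfold gb; omega
  unfold vtx; omega

lemma vtx_inj {s t : Fin m} (ht : Free m I J t) (hs : Free m I J s) (hst : t ≠ s)
    (h : vtx m I J c t = vtx m I J c s) : False := by
  rcases pred_total ht hs hst with h' | h'
  · exact absurd h (Nat.ne_of_lt (vtx_lt_of_pred h'))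
  · exact absurd h.symm (Nat.ne_of_lt (vtx_lt_of_pred h'))

/-- number of free indices -/
lemma card_free (hIJ : I < J) (hJm : J < m) :
    (Finset.univ.filter (Free m I J)).card = m - 2 := by
  have : (Finset.univ.filter (Free m I J))
      = (Finset.univ \ {⟨I, by omega⟩, ⟨J, hJm⟩} : Finset (Fin m)) := by
    ext s
    simp [Free, Fin.ext_iff]
  rw [this, Finset.card_sdiff_of_subset (by simp)]
  rw [Finset.card_insert_of_notMem (by simp [Fin.ext_iff]; omega), Finset.card_singleton]
  simp

lemma rank_le (hIJ : I < J) (hJm : J < m) {s : Fin m} (hs : Free m I J s) :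
    rank m I J c s ≤ m - 3 := by
  have h1 : (Finset.univ.filter fun t => Pred m I J c t s)
      ⊆ (Finset.univ.filter (Free m I J)).erase s := by
    intro t htm
    simp only [Finset.mem_filter, Finset.mem_univ, true_and] at htm
    refine Finset.mem_erase.mpr ⟨?_, by simp [htm.1]⟩
    intro h; exact absurd (h ▸ htm.2) (lt_irrefl _)
  have h2 := Finset.card_le_card h1
  rw [Finset.card_erase_of_mem (by simp [hs]), card_free hIJ hJm] at h2
  unfold rank
  omega

end Basic

end ShiFlat

namespace ShiFlat

section Two

variable (m I J q : ℕ)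

/-- allowed label sets -/
def BSet (s : Fin m) : Finset ℕ :=
  if s.val = I ∨ s.val = J then {0}
  else if s.val < I then Finset.Icc 1 (q - 2 * m) else Finset.range (q - 2 * m + 1)

variable {m I J q : ℕ} {c : Fin m → ℕ}

lemma mem_BSet_free {s : Fin m} (hc : ∀ u, c u ∈ BSet m I J q u) (hs : Free m I J s) :
    c s ≤ q - 2 * m ∧ (s.val < I → c s ≠ 0) := by
  have h := hc s
  unfold BSet at h
  rw [if_neg (by rintro (h' | h') <;> exact absurd h' (by simp [Free] at hs ⊢; tauto))] at h
  by_cases h' : s.val < I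
  · rw [if_pos h'] at h
    simp only [Finset.mem_Icc] at h
    exact ⟨h.2, fun _ => by omega⟩
  · rw [if_neg h'] at h
    simp only [Finset.mem_range] at h
    exact ⟨by omega, fun hI => absurd hI h'⟩

lemma mem_BSet_fixed {s : Fin m} (hc : ∀ u, c u ∈ BSet m I J q u) (hs : ¬ Free m I J s) :
    c s = 0 := by
  have h := hc s
  unfold BSet at h
  rw [if_pos (by simp [Free] at hs; tauto)] at h
  simpa using h

lemma free_implies_m3 {s : Fin m} (hIJ : I < J) (hJm : J < m) (hs : Free m I J s) : 3 ≤ m := by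
  obtain ⟨h1, h2⟩ := hs
  have := s.isLt
  omega

lemma vtx_bounds (hIJ : I < J) (hJm : J < m) (hq : 2 * m + 4 ≤ q)
    (hc : ∀ u, c u ∈ BSet m I J q u) {s : Fin m} (hs : Free m I J s) :
    2 ≤ vtx m I J c s ∧ (c s % 2 = 0 → 2 * vtx m I J c s + 2 ≤ q)
      ∧ (c s % 2 ≠ 0 → 2 * vtx m I J c s + 1 ≤ q ∧ 3 ≤ vtx m I J c s) := by
  have hm3 := free_implies_m3 hIJ hJm hs
  have hr := rank_le (c := c) hIJ hJm hs
  have hcs := (mem_BSet_free hc hs).1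
  unfold vtx gb
  omega

/-- classification of adjacent vertices: same bucket consecutive, or an R-bucket followed
by the next L-bucket. -/
lemma adjacent_classify {s t : Fin m} (hs : Free m I J s) (ht : Free m I J t)
    (h : vtx m I J c s = vtx m I J c t + 1) :
    (c s = c t ∧ Pred m I J c t s) ∨ (c t % 2 ≠ 0 ∧ c s = c t + 1) := by
  have hst : t ≠ s := by
    intro h'; subst h'; omega
  rcases pred_total (c := c) hs ht (Ne.symm hst) with hp | hp
  · exact absurd (vtx_lt_of_pred hp) (by omega)
  · -- Pred t s
    have hlab : c t ≤ c s := label_le_of_key_lt hp.2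
    by_cases he : c t = c s
    · exact Or.inl ⟨he.symm, hp⟩
    · have hlt : c t < c s := by omega
      have hrk := rank_lt_of_pred hp
      have hgb : gb m c t ≤ gb m c s := by unfold gb; omega
      have hgb2 : gb m c s = gb m c t ∧ rank m I J c s = rank m I J c t + 1 := by
        unfold vtx at h; omega
      have := hgb2.1
      unfold gb at this
      right
      omega

lemma natCast_inj_of_lt {a b : ℕ} (ha : a < q) (hb : b < q) (h : (a : ZMod q) = b) : a = b := by
  have h2 := (ZMod.natCast_eq_natCast_iff a b q).mp h
  unfold Nat.ModEq at h2
  rwa [Nat.mod_eq_of_lt ha, Nat.mod_eq_of_lt hb] at h2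

lemma neg_one_cast (hq : 1 ≤ q) : (-1 : ZMod q) = ((q - 1 : ℕ) : ZMod q) := by
  have : ((q - 1 : ℕ) : ZMod q) = (q : ℕ) - 1 := by
    push_cast [Nat.cast_sub hq]; ring
  rw [this, ZMod.natCast_self]; ring

lemma neg_cast {v : ℕ} (hv : v ≤ q) : (-(v : ZMod q)) = ((q - v : ℕ) : ZMod q) := by
  have : ((q - v : ℕ) : ZMod q) = (q : ℕ) - v := by
    push_cast [Nat.cast_sub hv]; ring
  rw [this, ZMod.natCast_self]; ring

lemma two_cast : (2 : ZMod q) = ((2 : ℕ) : ZMod q) := by push_cast; ring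

end Two

end ShiFlat

namespace ShiFlat

section Three

variable {m I J q : ℕ} {c : Fin m → ℕ}

/-- bundled bounds for the X-value of a free token -/
lemma Xval_facts (hIJ : I < J) (hJm : J < m) (hq : 2 * m + 12 ≤ q)
    (hc : ∀ u, c u ∈ BSet m I J q u) {s : Fin m} (hs : Free m I J s) :
    3 ≤ Xval m I J q c s ∧ Xval m I J q c s + 3 ≤ q
      ∧ (c s % 2 = 0 → Xval m I J q c s = vtx m I J c s + 1 ∧ 2 * Xval m I J q c s ≤ q)
      ∧ (c s % 2 ≠ 0 → Xval m I J q c s = q - vtx m I J c s ∧ q + 1 ≤ 2 * Xval m I J q c s) := by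
  obtain ⟨h1, h2, h3⟩ := vtx_bounds hIJ hJm (by omega) hc hs
  unfold Xval
  by_cases he : c s % 2 = 0
  · rw [if_pos he]
    have := h2 he
    refine ⟨by omega, by omega, fun _ => ⟨rfl, by omega⟩, fun h' => absurd he h'⟩
  · rw [if_neg he]
    have := h3 he
    exact ⟨by omega, by omega, fun h' => absurd h' he, fun _ => ⟨rfl, by omega⟩⟩

lemma Xval_ne_three (hIJ : I < J) (hJm : J < m) (hq : 2 * m + 12 ≤ q)
    (hc : ∀ u, c u ∈ BSet m I J q u) {s : Fin m} (hs : Free m I J s) (hsI : s.val < I) :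
    Xval m I J q c s ≠ 3 := by
  obtain ⟨h1, h2, h3⟩ := vtx_bounds hIJ hJm (by omega) hc hs
  intro h
  unfold Xval at h
  by_cases he : c s % 2 = 0
  · rw [if_pos he] at h
    -- vtx = 2, so gb = 0 and c s = 0
    have hv : vtx m I J c s = 2 := by omega
    have hgb : gb m c s = 0 := by unfold vtx at hv; omega
    have hc0 : c s = 0 := by unfold gb at hgb; omega
    exact (mem_BSet_free hc hs).2 hsI hc0
  · rw [if_neg he] at h
    have := (h3 he).1
    omega

/-- distinctness of X-values of distinct free tokens -/
lemma E1 (hIJ : I < J) (hJm : J < m) (hq : 2 * m + 12 ≤ q)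
    (hc : ∀ u, c u ∈ BSet m I J q u) {s t : Fin m} (hs : Free m I J s) (ht : Free m I J t)
    (hst : s ≠ t) : Xval m I J q c s ≠ Xval m I J q c t := by
  obtain ⟨_, _, hse, hso⟩ := Xval_facts hIJ hJm hq hc hs
  obtain ⟨_, _, hte, hto⟩ := Xval_facts hIJ hJm hq hc ht
  obtain ⟨hv2s, _, _⟩ := vtx_bounds hIJ hJm (by omega) hc hs
  obtain ⟨hv2t, _, _⟩ := vtx_bounds hIJ hJm (by omega) hc ht
  intro h
  by_cases he : c s % 2 = 0 <;> by_cases he' : c t % 2 = 0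
  · obtain ⟨e1, _⟩ := hse he; obtain ⟨e2, _⟩ := hte he'
    exact vtx_inj (c := c) hs ht hst (by omega)
  · obtain ⟨e1, b1⟩ := hse he; obtain ⟨e2, b2⟩ := hto he'
    omega
  · obtain ⟨e1, b1⟩ := hso he; obtain ⟨e2, b2⟩ := hte he'
    omega
  · obtain ⟨e1, b1⟩ := hso he; obtain ⟨e2, b2⟩ := hto he'
    have hvs := (vtx_bounds hIJ hJm (by omega) hc hs).2.2 he
    have hvt := (vtx_bounds hIJ hJm (by omega) hc ht).2.2 he'
    exact vtx_inj (c := c) hs ht hst (by omega)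

/-- no `x_s = x_t + 1` for `s < t` among free tokens -/
lemma E2 (hIJ : I < J) (hJm : J < m) (hq : 2 * m + 12 ≤ q)
    (hc : ∀ u, c u ∈ BSet m I J q u) {s t : Fin m} (hs : Free m I J s) (ht : Free m I J t)
    (hst : s < t) : Xval m I J q c s ≠ Xval m I J q c t + 1 := by
  obtain ⟨_, _, hse, hso⟩ := Xval_facts hIJ hJm hq hc hs
  obtain ⟨_, _, hte, hto⟩ := Xval_facts hIJ hJm hq hc ht
  obtain ⟨hv2s, hbse, hbso⟩ := vtx_bounds hIJ hJm (by omega) hc hs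
  obtain ⟨hv2t, hbte, hbto⟩ := vtx_bounds hIJ hJm (by omega) hc ht
  have hne : s ≠ t := ne_of_lt hst
  intro h
  by_cases he : c s % 2 = 0 <;> by_cases he' : c t % 2 = 0
  · obtain ⟨e1, b1⟩ := hse he; obtain ⟨e2, b2⟩ := hte he'
    have hv : vtx m I J c s = vtx m I J c t + 1 := by omega
    rcases adjacent_classify hs ht hv with ⟨hl, hp⟩ | ⟨ho, _⟩
    · rcases (key_lt_same_label hl.symm).mp hp.2 with ⟨-, hlt⟩ | ⟨ho, -⟩
      · exact absurd hst (asymm hlt)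
      · exact ho he
    · exact ho he'
  · obtain ⟨e1, b1⟩ := hse he; obtain ⟨e2, b2⟩ := hto he'
    have := hbse he; have := (hbto he').1
    omega
  · obtain ⟨e1, b1⟩ := hso he; obtain ⟨e2, b2⟩ := hte he'
    have h1 := (hbso he).1; have h2 := hbte he'
    -- vtx s + vtx t = q - 2, with 2*vtx s ≤ q - 1, 2*vtx t ≤ q - 2
    have hd : vtx m I J c s = vtx m I J c t ∨ vtx m I J c s = vtx m I J c t + 1 := by omega
    rcases hd with hd | hd
    · exact vtx_inj hs ht hne hd
    · rcases adjacent_classify hs ht hd with ⟨hl, -⟩ | ⟨ho, -⟩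
      · omega
      · exact ho he'
  · obtain ⟨e1, b1⟩ := hso he; obtain ⟨e2, b2⟩ := hto he'
    have h1 := (hbso he).1; have h2 := (hbto he').1
    have hv : vtx m I J c t = vtx m I J c s + 1 := by omega
    rcases adjacent_classify ht hs hv with ⟨hl, hp⟩ | ⟨ho, _⟩
    · rcases (key_lt_same_label hl.symm).mp hp.2 with ⟨ho, -⟩ | ⟨-, hlt⟩
      · omega
      · exact absurd hst (asymm hlt)
    · exact absurd e1 (by omega)

/-- no `x_s = -x_t` among free tokens -/
lemma E3 (hIJ : I < J) (hJm : J < m) (hq : 2 * m + 12 ≤ q)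
    (hc : ∀ u, c u ∈ BSet m I J q u) {s t : Fin m} (hs : Free m I J s) (ht : Free m I J t)
    (hst : s ≠ t) : Xval m I J q c s + Xval m I J q c t ≠ q := by
  obtain ⟨_, _, hse, hso⟩ := Xval_facts hIJ hJm hq hc hs
  obtain ⟨_, _, hte, hto⟩ := Xval_facts hIJ hJm hq hc ht
  obtain ⟨hv2s, hbse, hbso⟩ := vtx_bounds hIJ hJm (by omega) hc hs
  obtain ⟨hv2t, hbte, hbto⟩ := vtx_bounds hIJ hJm (by omega) hc ht
  intro h
  by_cases he : c s % 2 = 0 <;> by_cases he' : c t % 2 = 0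
  · obtain ⟨e1, b1⟩ := hse he; obtain ⟨e2, b2⟩ := hte he'
    have h1 := hbse he; have h2 := hbte he'
    exact vtx_inj (c := c) hs ht hst (by omega)
  · obtain ⟨e1, b1⟩ := hse he; obtain ⟨e2, b2⟩ := hto he'
    have h1 := hbse he; have h2 := (hbto he').1
    have hv : vtx m I J c t = vtx m I J c s + 1 := by omega
    rcases adjacent_classify ht hs hv with ⟨hl, -⟩ | ⟨ho, -⟩
    · exact absurd e1 (by omega)
    · exact ho he
  · obtain ⟨e1, b1⟩ := hso he; obtain ⟨e2, b2⟩ := hte he'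
    have h1 := (hbso he).1; have h2 := hbte he'
    have hv : vtx m I J c s = vtx m I J c t + 1 := by omega
    rcases adjacent_classify hs ht hv with ⟨hl, -⟩ | ⟨ho, -⟩
    · exact absurd e2 (by omega)
    · exact ho he'
  · obtain ⟨e1, b1⟩ := hso he; obtain ⟨e2, b2⟩ := hto he'
    have h1 := (hbso he).1; have h2 := (hbto he').1
    omega

/-- no `x_s = -x_t + 1` among free tokens -/
lemma E4 (hIJ : I < J) (hJm : J < m) (hq : 2 * m + 12 ≤ q)
    (hc : ∀ u, c u ∈ BSet m I J q u) {s t : Fin m} (hs : Free m I J s) (ht : Free m I J t)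
    (hst : s ≠ t) : Xval m I J q c s + Xval m I J q c t ≠ q + 1 := by
  obtain ⟨_, _, hse, hso⟩ := Xval_facts hIJ hJm hq hc hs
  obtain ⟨_, _, hte, hto⟩ := Xval_facts hIJ hJm hq hc ht
  obtain ⟨hv2s, hbse, hbso⟩ := vtx_bounds hIJ hJm (by omega) hc hs
  obtain ⟨hv2t, hbte, hbto⟩ := vtx_bounds hIJ hJm (by omega) hc ht
  intro h
  by_cases he : c s % 2 = 0 <;> by_cases he' : c t % 2 = 0
  · obtain ⟨e1, b1⟩ := hse he; obtain ⟨e2, b2⟩ := hte he'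
    have h1 := hbse he; have h2 := hbte he'
    omega
  · obtain ⟨e1, b1⟩ := hse he; obtain ⟨e2, b2⟩ := hto he'
    exact vtx_inj (c := c) hs ht hst (by omega)
  · obtain ⟨e1, b1⟩ := hso he; obtain ⟨e2, b2⟩ := hte he'
    exact vtx_inj (c := c) hs ht hst (by omega)
  · obtain ⟨e1, b1⟩ := hso he; obtain ⟨e2, b2⟩ := hto he'
    have h1 := (hbso he).1; have h2 := (hbto he').1
    exact vtx_inj (c := c) hs ht hst (by omega)

end Three

end ShiFlat

namespace ShiFlat

section Four

variable (m I J q : ℕ)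

def Yv (c : Fin m → ℕ) (s : Fin m) : ℕ :=
  if s.val = I then 2 else if s.val = J then q - 1 else Xval m I J q c s

variable {m I J q : ℕ} {c : Fin m → ℕ}

lemma phi_eq_Yv (hq : 1 ≤ q) (s : Fin m) :
    phi m I J q c s = ((Yv m I J q c s : ℕ) : ZMod q) := by
  unfold phi Yv
  by_cases h1 : s.val = I
  · rw [if_pos h1, if_pos h1, two_cast]
  · rw [if_neg h1, if_neg h1]
    by_cases h2 : s.val = J
    · rw [if_pos h2, if_pos h2, neg_one_cast hq]
    · rw [if_neg h2, if_neg h2]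

lemma Yv_eqI {s : Fin m} (h : s.val = I) : Yv m I J q c s = 2 := by
  unfold Yv; rw [if_pos h]

lemma Yv_eqJ (hIJ : I < J) {s : Fin m} (h : s.val = J) : Yv m I J q c s = q - 1 := by
  unfold Yv; rw [if_neg (by omega), if_pos h]

lemma Yv_free {s : Fin m} (h : Free m I J s) : Yv m I J q c s = Xval m I J q c s := by
  unfold Yv; rw [if_neg h.1, if_neg h.2]

lemma Yv_bounds (hIJ : I < J) (hJm : J < m) (hq : 2 * m + 12 ≤ q)
    (hc : ∀ u, c u ∈ BSet m I J q u) (s : Fin m) :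
    2 ≤ Yv m I J q c s ∧ Yv m I J q c s + 1 ≤ q ∧
      (s.val ≠ J → Yv m I J q c s + 3 ≤ q) := by
  by_cases h1 : s.val = I
  · rw [Yv_eqI h1]; omega
  · by_cases h2 : s.val = J
    · rw [Yv_eqJ hIJ h2]; omega
    · rw [Yv_free ⟨h1, h2⟩]
      obtain ⟨hb1, hb2, -⟩ := Xval_facts hIJ hJm hq hc ⟨h1, h2⟩
      omega

lemma not_free_cases {s : Fin m} (h : ¬ Free m I J s) : s.val = I ∨ s.val = J := by
  unfold Free at h; tauto

/-- the image of `phi` satisfies all the membership conditions. -/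
lemma phi_mem (hIJ : I < J) (hJm : J < m) (hq : 2 * m + 12 ≤ q)
    (hc : ∀ u, c u ∈ BSet m I J q u) :
    phi m I J q c ⟨I, by omega⟩ = 2 ∧
    phi m I J q c ⟨J, hJm⟩ = -1 ∧
    (∀ s, phi m I J q c s ≠ 0 ∧ phi m I J q c s ≠ 1) ∧
    (∀ s t, s ≠ t → phi m I J q c s ≠ phi m I J q c t) ∧
    (∀ s t, s < t → phi m I J q c s ≠ phi m I J q c t + 1) ∧
    (∀ s t, s ≠ t →
      ¬((s = ⟨I, by omega⟩ ∧ t = ⟨J, hJm⟩) ∨ (s = ⟨J, hJm⟩ ∧ t = ⟨I, by omega⟩)) →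
      phi m I J q c s ≠ -phi m I J q c t ∧ phi m I J q c s ≠ -phi m I J q c t + 1) := by
  have hq1 : 1 ≤ q := by omega
  have hYb := Yv_bounds hIJ hJm hq hc
  have hphi := phi_eq_Yv (m := m) (I := I) (J := J) (q := q) (c := c) hq1
  refine ⟨?_, ?_, ?_, ?_, ?_, ?_⟩
  · unfold phi; simp
  · unfold phi
    rw [if_neg (by simp; omega), if_pos (by simp)]
  · -- x s ∉ {0, 1}
    intro s
    obtain ⟨hb1, hb2, -⟩ := hYb s
    constructor
    · rw [hphi s]
      intro h
      have : Yv m I J q c s = 0 := by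
        have h0 : ((0 : ℕ) : ZMod q) = 0 := by push_cast; ring
        exact natCast_inj_of_lt (by omega) (by omega) (h.trans h0.symm)
      omega
    · rw [hphi s]
      intro h
      have : Yv m I J q c s = 1 := by
        have h0 : ((1 : ℕ) : ZMod q) = 1 := by push_cast; ring
        exact natCast_inj_of_lt (by omega) (by omega) (h.trans h0.symm)
      omega
  · -- distinctness
    intro s t hst
    rw [hphi s, hphi t]
    intro h
    obtain ⟨hb1s, hb2s, -⟩ := hYb s
    obtain ⟨hb1t, hb2t, -⟩ := hYb t
    have hY : Yv m I J q c s = Yv m I J q c t := natCast_inj_of_lt (by omega) (by omega) h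
    by_cases h1 : s.val = I <;> by_cases h2 : t.val = I
    · exact hst (Fin.ext (by omega))
    · by_cases h3 : t.val = J
      · rw [Yv_eqI h1, Yv_eqJ hIJ h3] at hY; omega
      · rw [Yv_eqI h1, Yv_free ⟨h2, h3⟩] at hY
        obtain ⟨hb, -, -⟩ := Xval_facts hIJ hJm hq hc ⟨h2, h3⟩
        omega
    · by_cases h3 : s.val = J
      · rw [Yv_eqJ hIJ h3, Yv_eqI h2] at hY; omega
      · rw [Yv_free ⟨h1, h3⟩, Yv_eqI h2] at hY
        obtain ⟨hb, -, -⟩ := Xval_facts hIJ hJm hq hc ⟨h1, h3⟩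
        omega
    · by_cases h3 : s.val = J <;> by_cases h4 : t.val = J
      · exact hst (Fin.ext (by omega))
      · rw [Yv_eqJ hIJ h3, Yv_free ⟨h2, h4⟩] at hY
        obtain ⟨-, hb, -⟩ := Xval_facts hIJ hJm hq hc ⟨h2, h4⟩
        omega
      · rw [Yv_free ⟨h1, h3⟩, Yv_eqJ hIJ h4] at hY
        obtain ⟨-, hb, -⟩ := Xval_facts hIJ hJm hq hc ⟨h1, h3⟩
        omega
      · rw [Yv_free ⟨h1, h3⟩, Yv_free ⟨h2, h4⟩] at hY
        exact E1 hIJ hJm hq hc ⟨h1, h3⟩ ⟨h2, h4⟩ hst hY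
  · -- x s ≠ x t + 1 for s < t
    intro s t hst
    rw [hphi s, hphi t]
    obtain ⟨hb1s, hb2s, -⟩ := hYb s
    obtain ⟨hb1t, hb2t, hb3t⟩ := hYb t
    by_cases hJ4 : t.val = J
    · -- x t + 1 = 0
      rw [Yv_eqJ hIJ hJ4]
      intro h
      have h2 : ((q - 1 : ℕ) : ZMod q) + 1 = ((0 : ℕ) : ZMod q) := by
        push_cast [Nat.cast_sub hq1]
        rw [ZMod.natCast_self]; ring
      rw [h2] at h
      have : Yv m I J q c s = 0 := natCast_inj_of_lt (by omega) (by omega) h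
      omega
    · have hb3t := hb3t hJ4
      intro h
      have h2 : ((Yv m I J q c t : ℕ) : ZMod q) + 1 = ((Yv m I J q c t + 1 : ℕ) : ZMod q) := by
        push_cast; ring
      rw [h2] at h
      have hY : Yv m I J q c s = Yv m I J q c t + 1 :=
        natCast_inj_of_lt (by omega) (by omega) h
      have hne : s ≠ t := ne_of_lt hst
      by_cases h1 : s.val = I
      · rw [Yv_eqI h1] at hY; omega
      · by_cases h3 : s.val = J
        · rw [Yv_eqJ hIJ h3] at hY
          by_cases h2' : t.val = I
          · rw [Yv_eqI h2'] at hY; omega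
          · rw [Yv_free ⟨h2', hJ4⟩] at hY
            obtain ⟨-, hb, -⟩ := Xval_facts hIJ hJm hq hc ⟨h2', hJ4⟩
            omega
        · by_cases h2' : t.val = I
          · rw [Yv_free ⟨h1, h3⟩, Yv_eqI h2'] at hY
            have hsI : s.val < I := by
              have := Fin.lt_def.mp hst; omega
            exact Xval_ne_three hIJ hJm hq hc ⟨h1, h3⟩ hsI hY
          · rw [Yv_free ⟨h1, h3⟩, Yv_free ⟨h2', hJ4⟩] at hY
            exact E2 hIJ hJm hq hc ⟨h1, h3⟩ ⟨h2', hJ4⟩ hst hY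
  · -- x s ≠ -x t and x s ≠ -x t + 1
    intro s t hst hexc
    obtain ⟨hb1s, hb2s, -⟩ := hYb s
    obtain ⟨hb1t, hb2t, -⟩ := hYb t
    have hcase : ∀ a b : Fin m, a.val = I → b.val = J → a = (⟨I, by omega⟩ : Fin m) ∧
        b = (⟨J, hJm⟩ : Fin m) := fun a b ha hb => ⟨Fin.ext ha, Fin.ext hb⟩
    rw [hphi s, hphi t, neg_cast (by omega)]
    constructor
    · intro h
      have hY : Yv m I J q c s = q - Yv m I J q c t :=
        natCast_inj_of_lt (by omega) (by omega) h
      have hY' : Yv m I J q c s + Yv m I J q c t = q := by omega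
      by_cases h1 : s.val = I <;> by_cases h2 : t.val = I
      · exact hst (Fin.ext (by omega))
      · by_cases h4 : t.val = J
        · exact hexc (Or.inl ⟨Fin.ext h1, Fin.ext h4⟩)
        · rw [Yv_eqI h1, Yv_free ⟨h2, h4⟩] at hY'
          obtain ⟨-, hb, -⟩ := Xval_facts hIJ hJm hq hc ⟨h2, h4⟩
          omega
      · by_cases h3 : s.val = J
        · exact hexc (Or.inr ⟨Fin.ext h3, Fin.ext h2⟩)
        · rw [Yv_free ⟨h1, h3⟩, Yv_eqI h2] at hY'
          obtain ⟨-, hb, -⟩ := Xval_facts hIJ hJm hq hc ⟨h1, h3⟩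
          omega
      · by_cases h3 : s.val = J <;> by_cases h4 : t.val = J
        · exact hst (Fin.ext (by omega))
        · rw [Yv_eqJ hIJ h3, Yv_free ⟨h2, h4⟩] at hY'
          obtain ⟨hb, -, -⟩ := Xval_facts hIJ hJm hq hc ⟨h2, h4⟩
          omega
        · rw [Yv_free ⟨h1, h3⟩, Yv_eqJ hIJ h4] at hY'
          obtain ⟨hb, -, -⟩ := Xval_facts hIJ hJm hq hc ⟨h1, h3⟩
          omega
        · rw [Yv_free ⟨h1, h3⟩, Yv_free ⟨h2, h4⟩] at hY'
          exact E3 hIJ hJm hq hc ⟨h1, h3⟩ ⟨h2, h4⟩ hst hY'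
    · intro h
      have h2c : ((q - Yv m I J q c t : ℕ) : ZMod q) + 1
          = ((q - Yv m I J q c t + 1 : ℕ) : ZMod q) := by push_cast; ring
      rw [h2c] at h
      have hY : Yv m I J q c s = q - Yv m I J q c t + 1 :=
        natCast_inj_of_lt (by omega) (by omega) h
      have hY' : Yv m I J q c s + Yv m I J q c t = q + 1 := by omega
      by_cases h1 : s.val = I <;> by_cases h2 : t.val = I
      · exact hst (Fin.ext (by omega))
      · by_cases h4 : t.val = J
        · exact hexc (Or.inl ⟨Fin.ext h1, Fin.ext h4⟩)
        · rw [Yv_eqI h1, Yv_free ⟨h2, h4⟩] at hY'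
          obtain ⟨-, hb, -⟩ := Xval_facts hIJ hJm hq hc ⟨h2, h4⟩
          omega
      · by_cases h3 : s.val = J
        · exact hexc (Or.inr ⟨Fin.ext h3, Fin.ext h2⟩)
        · rw [Yv_free ⟨h1, h3⟩, Yv_eqI h2] at hY'
          obtain ⟨-, hb, -⟩ := Xval_facts hIJ hJm hq hc ⟨h1, h3⟩
          omega
      · by_cases h3 : s.val = J <;> by_cases h4 : t.val = J
        · exact hst (Fin.ext (by omega))
        · rw [Yv_eqJ hIJ h3, Yv_free ⟨h2, h4⟩] at hY'
          obtain ⟨hb, -, -⟩ := Xval_facts hIJ hJm hq hc ⟨h2, h4⟩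
          omega
        · rw [Yv_free ⟨h1, h3⟩, Yv_eqJ hIJ h4] at hY'
          obtain ⟨hb, -, -⟩ := Xval_facts hIJ hJm hq hc ⟨h1, h3⟩
          omega
        · rw [Yv_free ⟨h1, h3⟩, Yv_free ⟨h2, h4⟩] at hY'
          exact E4 hIJ hJm hq hc ⟨h1, h3⟩ ⟨h2, h4⟩ hst hY'

end Four

end ShiFlat

namespace ShiFlat

section Five

variable (m I J q : ℕ)

def MemCond (hIm : I < m) (hJm : J < m) (x : Fin m → ZMod q) : Prop :=
  x ⟨I, hIm⟩ = 2 ∧ x ⟨J, hJm⟩ = -1 ∧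
  (∀ s, x s ≠ 0 ∧ x s ≠ 1) ∧
  (∀ s t, s ≠ t → x s ≠ x t) ∧
  (∀ s t, s < t → x s ≠ x t + 1) ∧
  (∀ s t, s ≠ t →
    ¬((s = ⟨I, hIm⟩ ∧ t = ⟨J, hJm⟩) ∨ (s = ⟨J, hJm⟩ ∧ t = ⟨I, hIm⟩)) →
    x s ≠ -x t ∧ x s ≠ -x t + 1)

def wD (x : Fin m → ZMod q) (s : Fin m) : ℕ :=
  if 2 * (x s).val ≤ q then (x s).val - 1 else q - (x s).val

def Occ (x : Fin m → ZMod q) : Finset ℕ :=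
  (Finset.univ.filter (Free m I J)).image (wD m q x)

def gbd (x : Fin m → ZMod q) (s : Fin m) : ℕ :=
  ((Finset.Ico 2 (wD m q x s)).filter (fun b => b ∉ Occ m I J q x)).card

def labd (x : Fin m → ZMod q) (s : Fin m) : ℕ :=
  if 2 * (x s).val ≤ q then 2 * gbd m I J q x s else 2 * gbd m I J q x s - 1

def psi (x : Fin m → ZMod q) : Fin m → ℕ :=
  fun s => if Free m I J s then labd m I J q x s else 0

variable {m I J q : ℕ} {x : Fin m → ZMod q}

lemma cast_val_eq (hq : 1 ≤ q) (a : ZMod q) : ((a.val : ℕ) : ZMod q) = a := by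
  haveI : NeZero q := ⟨by omega⟩
  exact ZMod.natCast_rightInverse a

lemma val_lt' (hq : 1 ≤ q) (a : ZMod q) : a.val < q := by
  haveI : NeZero q := ⟨by omega⟩
  exact ZMod.val_lt a

/-- basic bounds for values of free tokens -/
lemma Xd_facts {hIm : I < m} {hJm : J < m} (hIJ : I < J) (hq : 2 * m + 12 ≤ q)
    (hx : MemCond m I J q hIm hJm x) {s : Fin m} (hs : Free m I J s) :
    3 ≤ (x s).val ∧ (x s).val + 3 ≤ q ∧ (x s).val ≠ q - 2 := by
  obtain ⟨h1, h2, h3, h4, h5, h6⟩ := hx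
  have hq1 : 1 ≤ q := by omega
  have hvlt := val_lt' hq1 (x s)
  have hcast := cast_val_eq hq1 (x s)
  have hne0 : (x s).val ≠ 0 := by
    intro h; apply (h3 s).1; rw [← hcast, h]; push_cast; ring
  have hne1 : (x s).val ≠ 1 := by
    intro h; apply (h3 s).2; rw [← hcast, h]; push_cast; ring
  have hsI : s ≠ (⟨I, hIm⟩ : Fin m) := by
    intro h; exact hs.1 (by rw [h])
  have hsJ : s ≠ (⟨J, hJm⟩ : Fin m) := by
    intro h; exact hs.2 (by rw [h])
  have hne2 : (x s).val ≠ 2 := by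
    intro h; apply h4 s _ hsI; rw [h1, ← hcast, h]; push_cast; ring
  have hneq1 : (x s).val ≠ q - 1 := by
    intro h; apply h4 s _ hsJ; rw [h2, ← hcast, h, neg_one_cast hq1]
  have hneq2 : (x s).val ≠ q - 2 := by
    intro h
    have hexc : ¬((s = (⟨I, hIm⟩ : Fin m) ∧ (⟨I, hIm⟩ : Fin m) = (⟨J, hJm⟩ : Fin m)) ∨
        (s = (⟨J, hJm⟩ : Fin m) ∧ (⟨I, hIm⟩ : Fin m) = (⟨I, hIm⟩ : Fin m))) := by
      rintro (⟨h', -⟩ | ⟨h', -⟩) <;> [exact hsI h'; exact hsJ h']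
    apply (h6 s _ hsI hexc).1
    rw [h1, ← hcast, h, two_cast, neg_cast (by omega)]
  omega

/-- nat-level relations among free tokens -/
lemma Nrel {hIm : I < m} {hJm : J < m} (hIJ : I < J) (hq : 2 * m + 12 ≤ q)
    (hx : MemCond m I J q hIm hJm x) {s t : Fin m} (hs : Free m I J s) (ht : Free m I J t)
    (hst : s ≠ t) :
    (x s).val ≠ (x t).val ∧ (s < t → (x s).val ≠ (x t).val + 1) ∧
      (x s).val + (x t).val ≠ q ∧ (x s).val + (x t).val ≠ q + 1 := by
  obtain ⟨h1, h2, h3, h4, h5, h6⟩ := hx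
  have hq1 : 1 ≤ q := by omega
  have hcs := cast_val_eq hq1 (x s)
  have hct := cast_val_eq hq1 (x t)
  have hvs := val_lt' hq1 (x s)
  have hvt := val_lt' hq1 (x t)
  have hexc : ¬((s = (⟨I, hIm⟩ : Fin m) ∧ t = (⟨J, hJm⟩ : Fin m)) ∨
      (s = (⟨J, hJm⟩ : Fin m) ∧ t = (⟨I, hIm⟩ : Fin m))) := by
    rintro (⟨h', -⟩ | ⟨h', -⟩)
    · exact hs.1 (by rw [h'])
    · exact hs.2 (by rw [h'])
  refine ⟨?_, ?_, ?_, ?_⟩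
  · intro h
    exact h4 s t hst (by rw [← hcs, ← hct, h])
  · intro hlt h
    apply h5 s t hlt
    rw [← hcs, ← hct, h]
    push_cast; ring
  · intro h
    apply (h6 s t hst hexc).1
    rw [← hcs, ← hct, neg_cast (le_of_lt hvt)]
    congr 1
    omega
  · intro h
    apply (h6 s t hst hexc).2
    rw [← hcs, ← hct, neg_cast (le_of_lt hvt)]
    have : ((x s).val : ZMod q) = ((q - (x t).val + 1 : ℕ) : ZMod q) := by
      congr 1; omega
    rw [this]
    push_cast; ring

lemma wD_facts {hIm : I < m} {hJm : J < m} (hIJ : I < J) (hq : 2 * m + 12 ≤ q)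
    (hx : MemCond m I J q hIm hJm x) {s : Fin m} (hs : Free m I J s) :
    2 ≤ wD m q x s ∧
      (2 * (x s).val ≤ q → (x s).val = wD m q x s + 1 ∧ 2 * wD m q x s + 2 ≤ q) ∧
      (¬ 2 * (x s).val ≤ q → (x s).val = q - wD m q x s ∧ 2 * wD m q x s + 1 ≤ q
        ∧ wD m q x s + 3 ≤ q) := by
  obtain ⟨hb1, hb2, hb3⟩ := Xd_facts hIJ hq hx hs
  unfold wD
  by_cases hp : 2 * (x s).val ≤ q
  · rw [if_pos hp]; exact ⟨by omega, fun _ => ⟨by omega, by omega⟩, fun h => absurd hp h⟩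
  · rw [if_neg hp]
    exact ⟨by omega, fun h => absurd h hp, fun _ => ⟨by omega, by omega, by omega⟩⟩

lemma wD_inj {hIm : I < m} {hJm : J < m} (hIJ : I < J) (hq : 2 * m + 12 ≤ q)
    (hx : MemCond m I J q hIm hJm x) {s t : Fin m} (hs : Free m I J s) (ht : Free m I J t)
    (hst : s ≠ t) : wD m q x s ≠ wD m q x t := by
  obtain ⟨hw2s, hwps, hwms⟩ := wD_facts hIJ hq hx hs
  obtain ⟨hw2t, hwpt, hwmt⟩ := wD_facts hIJ hq hx ht
  obtain ⟨n1, -, n3, n4⟩ := Nrel hIJ hq hx hs ht hst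
  intro h
  by_cases hp : 2 * (x s).val ≤ q <;> by_cases hp' : 2 * (x t).val ≤ q
  · obtain ⟨e1, -⟩ := hwps hp; obtain ⟨e2, -⟩ := hwpt hp'; omega
  · obtain ⟨e1, -⟩ := hwps hp; obtain ⟨e2, -, -⟩ := hwmt hp'; omega
  · obtain ⟨e1, -, -⟩ := hwms hp; obtain ⟨e2, -⟩ := hwpt hp'; omega
  · obtain ⟨e1, -, -⟩ := hwms hp; obtain ⟨e2, -, -⟩ := hwmt hp'; omega

end Five

end ShiFlat

namespace ShiFlat

section Six

variable {m I J q : ℕ} {x : Fin m → ZMod q} {hIm : I < m} {hJm : J < m}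

/-- going up one step from a plus token: occupant is plus with larger index -/
lemma step_up (hIJ : I < J) (hq : 2 * m + 12 ≤ q) (hx : MemCond m I J q hIm hJm x)
    {s t : Fin m} (hs : Free m I J s) (ht : Free m I J t) (hp : 2 * (x s).val ≤ q)
    (hw : wD m q x t = wD m q x s + 1) : 2 * (x t).val ≤ q ∧ s < t := by
  obtain ⟨hw2s, hwps, hwms⟩ := wD_facts hIJ hq hx hs
  obtain ⟨hw2t, hwpt, hwmt⟩ := wD_facts hIJ hq hx ht
  have hst : s ≠ t := by
    intro h; subst h; omega
  obtain ⟨n1, n2, n3, n4⟩ := Nrel hIJ hq hx hs ht hst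
  obtain ⟨n1', n2', n3', n4'⟩ := Nrel hIJ hq hx ht hs (Ne.symm hst)
  obtain ⟨e1, b1⟩ := hwps hp
  by_cases hp' : 2 * (x t).val ≤ q
  · obtain ⟨e2, b2⟩ := hwpt hp'
    refine ⟨hp', ?_⟩
    rcases lt_trichotomy s t with h | h | h
    · exact h
    · exact absurd h hst
    · exact absurd (by omega : (x t).val = (x s).val + 1) (n2' h)
  · obtain ⟨e2, b2, b3⟩ := hwmt hp'
    exact absurd (by omega : (x s).val + (x t).val = q) n3

/-- going down one step from a minus token: occupant is minus with larger index -/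
lemma step_down (hIJ : I < J) (hq : 2 * m + 12 ≤ q) (hx : MemCond m I J q hIm hJm x)
    {s t : Fin m} (hs : Free m I J s) (ht : Free m I J t) (hp : ¬ 2 * (x s).val ≤ q)
    (hw : wD m q x t + 1 = wD m q x s) : ¬ 2 * (x t).val ≤ q ∧ s < t := by
  obtain ⟨hw2s, hwps, hwms⟩ := wD_facts hIJ hq hx hs
  obtain ⟨hw2t, hwpt, hwmt⟩ := wD_facts hIJ hq hx ht
  have hst : s ≠ t := by
    intro h; subst h; omega
  obtain ⟨n1, n2, n3, n4⟩ := Nrel hIJ hq hx hs ht hst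
  obtain ⟨n1', n2', n3', n4'⟩ := Nrel hIJ hq hx ht hs (Ne.symm hst)
  obtain ⟨e1, b1, b1'⟩ := hwms hp
  by_cases hp' : 2 * (x t).val ≤ q
  · obtain ⟨e2, b2⟩ := hwpt hp'
    exact absurd (by omega : (x s).val + (x t).val = q) n3
  · obtain ⟨e2, b2, b3⟩ := hwmt hp'
    refine ⟨hp', ?_⟩
    rcases lt_trichotomy s t with h | h | h
    · exact h
    · exact absurd h hst
    · exact absurd (by omega : (x t).val = (x s).val + 1) (n2' h)

lemma mem_Occ {b : ℕ} : b ∈ Occ m I J q x ↔ ∃ t, Free m I J t ∧ wD m q x t = b := by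
  unfold Occ
  simp only [Finset.mem_image, Finset.mem_filter, Finset.mem_univ, true_and]

lemma chain_up (hIJ : I < J) (hq : 2 * m + 12 ≤ q) (hx : MemCond m I J q hIm hJm x)
    {s : Fin m} (hs : Free m I J s) (hp : 2 * (x s).val ≤ q) (d : ℕ)
    (H : ∀ b, wD m q x s < b → b ≤ wD m q x s + d → b ∈ Occ m I J q x) :
    ∃ t, Free m I J t ∧ 2 * (x t).val ≤ q ∧ wD m q x t = wD m q x s + d ∧ (s = t ∨ s < t) := by
  induction d with
  | zero => exact ⟨s, hs, hp, by omega, Or.inl rfl⟩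
  | succ d ih =>
    obtain ⟨t, ht, htp, htw, hts⟩ := ih (fun b h1 h2 => H b h1 (by omega))
    obtain ⟨u, hu, huw⟩ := mem_Occ.mp (H (wD m q x s + (d + 1)) (by omega) le_rfl)
    obtain ⟨hup, htu⟩ := step_up hIJ hq hx ht hu htp (by omega)
    refine ⟨u, hu, hup, huw, Or.inr ?_⟩
    rcases hts with h | h
    · exact h ▸ htu
    · exact h.trans htu

lemma chain_down (hIJ : I < J) (hq : 2 * m + 12 ≤ q) (hx : MemCond m I J q hIm hJm x)
    {s : Fin m} (hs : Free m I J s) (hp : ¬ 2 * (x s).val ≤ q) (d : ℕ) (hd : d + 2 ≤ wD m q x s)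
    (H : ∀ b, wD m q x s - d ≤ b → b < wD m q x s → b ∈ Occ m I J q x) :
    ∃ t, Free m I J t ∧ ¬ 2 * (x t).val ≤ q ∧ wD m q x t + d = wD m q x s ∧ (s = t ∨ s < t) := by
  induction d with
  | zero => exact ⟨s, hs, hp, by omega, Or.inl rfl⟩
  | succ d ih =>
    obtain ⟨t, ht, htp, htw, hts⟩ := ih (by omega) (fun b h1 h2 => H b (by omega) h2)
    obtain ⟨u, hu, huw⟩ := mem_Occ.mp (H (wD m q x s - (d + 1)) le_rfl (by omega))
    obtain ⟨hup, htu⟩ := step_down hIJ hq hx ht hu htp (by omega)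
    refine ⟨u, hu, hup, by omega, Or.inr ?_⟩
    rcases hts with h | h
    · exact h ▸ htu
    · exact h.trans htu

end Six

end ShiFlat

namespace ShiFlat

section Seven

variable {m I J q : ℕ} {x : Fin m → ZMod q} {hIm : I < m} {hJm : J < m}

lemma Occ_subset (hIJ : I < J) (hq : 2 * m + 12 ≤ q) (hx : MemCond m I J q hIm hJm x) :
    Occ m I J q x ⊆ Finset.Ico 2 ((q - 1) / 2 + 1) := by
  intro b hb
  obtain ⟨t, ht, hw⟩ := mem_Occ.mp hb
  obtain ⟨h2, hplus, hminus⟩ := wD_facts hIJ hq hx ht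
  rw [Finset.mem_Ico]
  by_cases hp : 2 * (x t).val ≤ q
  · have := (hplus hp).2; omega
  · have := (hminus hp).2.1; omega

lemma card_Occ (hIJ : I < J) (hJm' : J < m) (hq : 2 * m + 12 ≤ q)
    (hx : MemCond m I J q hIm hJm x) : (Occ m I J q x).card = m - 2 := by
  unfold Occ
  rw [Finset.card_image_of_injOn, card_free hIJ hJm']
  intro s hs t ht hst
  simp only [Finset.coe_filter, Finset.mem_univ, true_and, Set.mem_setOf_eq] at hs ht
  by_contra hne
  exact wD_inj hIJ hq hx hs ht hne hst

lemma Gtot_card (hIJ : I < J) (hJm' : J < m) (hq : 2 * m + 12 ≤ q)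
    (hx : MemCond m I J q hIm hJm x) :
    ((Finset.Ico 2 ((q - 1) / 2 + 1)).filter (fun b => b ∉ Occ m I J q x)).card
      = (q - 1) / 2 - 1 - (m - 2) := by
  have hsplit := Finset.card_filter_add_card_filter_not
    (s := Finset.Ico 2 ((q - 1) / 2 + 1)) (p := fun b => b ∈ Occ m I J q x)
  have hOcc : (Finset.Ico 2 ((q - 1) / 2 + 1)).filter (fun b => b ∈ Occ m I J q x)
      = Occ m I J q x := by
    apply Finset.Subset.antisymm
    · intro b hb; exact (Finset.mem_filter.mp hb).2
    · intro b hb; exact Finset.mem_filter.mpr ⟨Occ_subset hIJ hq hx hb, hb⟩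
  rw [hOcc, card_Occ hIJ hJm' hq hx] at hsplit
  have hcard : (Finset.Ico 2 ((q - 1) / 2 + 1)).card = (q - 1) / 2 - 1 := by
    rw [Nat.card_Ico]
    omega
  omega

lemma gbd_le (hIJ : I < J) (hJm' : J < m) (hq : 2 * m + 12 ≤ q)
    (hx : MemCond m I J q hIm hJm x) {s : Fin m} (hs : Free m I J s) :
    gbd m I J q x s ≤ (q - 1) / 2 - 1 - (m - 2) := by
  rw [← Gtot_card hIJ hJm' hq hx]
  apply Finset.card_le_card
  apply Finset.filter_subset_filter
  apply Finset.Ico_subset_Ico le_rfl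
  obtain ⟨h2, hplus, hminus⟩ := wD_facts hIJ hq hx hs
  by_cases hp : 2 * (x s).val ≤ q
  · have := (hplus hp).2; omega
  · have := (hminus hp).2.1; omega

lemma gbd_lt_of_plus_odd (hIJ : I < J) (hJm' : J < m) (hq : 2 * m + 12 ≤ q)
    (hx : MemCond m I J q hIm hJm x) (hodd : q % 2 = 1) {s : Fin m} (hs : Free m I J s)
    (hp : 2 * (x s).val ≤ q) :
    gbd m I J q x s + 1 ≤ (q - 1) / 2 - 1 - (m - 2) := by
  by_contra hcon
  have hle := gbd_le hIJ hJm' hq hx hs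
  have heq : gbd m I J q x s = (q - 1) / 2 - 1 - (m - 2) := by omega
  obtain ⟨h2, hplus, hminus⟩ := wD_facts hIJ hq hx hs
  have hwK : wD m q x s ≤ (q - 1) / 2 := by
    have := (hplus hp).2; omega
  have hsub : ((Finset.Ico 2 (wD m q x s)).filter (fun b => b ∉ Occ m I J q x))
      ⊆ ((Finset.Ico 2 ((q - 1) / 2 + 1)).filter (fun b => b ∉ Occ m I J q x)) :=
    Finset.filter_subset_filter _ (Finset.Ico_subset_Ico le_rfl (by omega))
  have hseteq := Finset.eq_of_subset_of_card_le hsub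
    (by rw [Gtot_card hIJ hJm' hq hx]; unfold gbd at heq; omega)
  have H : ∀ b, wD m q x s < b → b ≤ wD m q x s + ((q - 1) / 2 - wD m q x s)
      → b ∈ Occ m I J q x := by
    intro b hb1 hb2
    by_contra hbO
    have hbB : b ∈ ((Finset.Ico 2 ((q - 1) / 2 + 1)).filter (fun b => b ∉ Occ m I J q x)) :=
      Finset.mem_filter.mpr ⟨Finset.mem_Ico.mpr ⟨by omega, by omega⟩, hbO⟩
    rw [← hseteq] at hbB
    have := (Finset.mem_Ico.mp (Finset.mem_filter.mp hbB).1).2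
    omega
  obtain ⟨t, ht, htp, htw, -⟩ := chain_up hIJ hq hx hs hp ((q - 1) / 2 - wD m q x s) H
  obtain ⟨-, hplus', -⟩ := wD_facts hIJ hq hx ht
  have := (hplus' htp).2
  omega

lemma gbd_pos_of_minus (hIJ : I < J) (hq : 2 * m + 12 ≤ q)
    (hx : MemCond m I J q hIm hJm x) {s : Fin m} (hs : Free m I J s)
    (hp : ¬ 2 * (x s).val ≤ q) : 1 ≤ gbd m I J q x s := by
  by_contra hcon
  have hzero : ((Finset.Ico 2 (wD m q x s)).filter (fun b => b ∉ Occ m I J q x)) = ∅ :=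
    Finset.card_eq_zero.mp (by unfold gbd at hcon; omega)
  obtain ⟨h2, hplus, hminus⟩ := wD_facts hIJ hq hx hs
  have H : ∀ b, wD m q x s - (wD m q x s - 2) ≤ b → b < wD m q x s → b ∈ Occ m I J q x := by
    intro b hb1 hb2
    by_contra hbO
    have : b ∈ ((Finset.Ico 2 (wD m q x s)).filter (fun b => b ∉ Occ m I J q x)) :=
      Finset.mem_filter.mpr ⟨Finset.mem_Ico.mpr ⟨by omega, hb2⟩, hbO⟩
    rw [hzero] at this
    exact absurd this (Finset.notMem_empty b)
  obtain ⟨t, ht, htp, htw, -⟩ := chain_down hIJ hq hx hs hp (wD m q x s - 2) (by omega) H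
  obtain ⟨h2t, -, hminus'⟩ := wD_facts hIJ hq hx ht
  obtain ⟨e1, -, -⟩ := hminus' htp
  obtain ⟨-, -, hb3⟩ := Xd_facts hIJ hq hx ht
  omega

lemma labd_le (hIJ : I < J) (hJm' : J < m) (hq : 2 * m + 12 ≤ q)
    (hx : MemCond m I J q hIm hJm x) {s : Fin m} (hs : Free m I J s) :
    labd m I J q x s + 2 * m ≤ q := by
  have hle := gbd_le hIJ hJm' hq hx hs
  have hm3 := free_implies_m3 hIJ hJm' hs
  unfold labd
  by_cases hp : 2 * (x s).val ≤ q
  · rw [if_pos hp]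
    rcases Nat.even_or_odd q with he | ho
    · have : q % 2 = 0 := Nat.even_iff.mp he
      omega
    · have hodd : q % 2 = 1 := Nat.odd_iff.mp ho
      have := gbd_lt_of_plus_odd hIJ hJm' hq hx hodd hs hp
      omega
  · rw [if_neg hp]
    have := gbd_pos_of_minus hIJ hq hx hs hp
    omega

lemma labd_ne_zero (hIJ : I < J) (hJm' : J < m) (hq : 2 * m + 12 ≤ q)
    (hx : MemCond m I J q hIm hJm x) {s : Fin m} (hs : Free m I J s) (hsI : s.val < I) :
    labd m I J q x s ≠ 0 := by
  intro hlab
  unfold labd at hlab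
  by_cases hp : 2 * (x s).val ≤ q
  swap
  · rw [if_neg hp] at hlab
    have := gbd_pos_of_minus hIJ hq hx hs hp
    omega
  rw [if_pos hp] at hlab
  have hzero : ((Finset.Ico 2 (wD m q x s)).filter (fun b => b ∉ Occ m I J q x)) = ∅ :=
    Finset.card_eq_zero.mp (by unfold gbd at hlab; omega)
  have H0 : ∀ b, 2 ≤ b → b < wD m q x s → b ∈ Occ m I J q x := by
    intro b hb1 hb2
    by_contra hbO
    have : b ∈ ((Finset.Ico 2 (wD m q x s)).filter (fun b => b ∉ Occ m I J q x)) :=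
      Finset.mem_filter.mpr ⟨Finset.mem_Ico.mpr ⟨hb1, hb2⟩, hbO⟩
    rw [hzero] at this
    exact absurd this (Finset.notMem_empty b)
  obtain ⟨h2s, hpluss, -⟩ := wD_facts hIJ hq hx hs
  -- occupant u at position 2
  have hu : ∃ u, Free m I J u ∧ wD m q x u = 2 ∧ u.val ≤ s.val := by
    by_cases hw2 : wD m q x s = 2
    · exact ⟨s, hs, hw2, le_rfl⟩
    · obtain ⟨u, hu, huw⟩ := mem_Occ.mp (H0 2 le_rfl (by omega))
      refine ⟨u, hu, huw, ?_⟩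
      -- chain from u up to s's position
      have hup : 2 * (x u).val ≤ q := by
        by_contra hup
        obtain ⟨-, -, hmin⟩ := wD_facts hIJ hq hx hu
        obtain ⟨e1, -, -⟩ := hmin hup
        obtain ⟨-, -, hb3⟩ := Xd_facts hIJ hq hx hu
        omega
      have H' : ∀ b, wD m q x u < b → b ≤ wD m q x u + (wD m q x s - 2) → b ∈ Occ m I J q x := by
        intro b hb1 hb2
        rcases Nat.lt_or_ge b (wD m q x s) with h | h
        · exact H0 b (by omega) h
        · have hbeq : b = wD m q x s := by omega
          exact mem_Occ.mpr ⟨s, hs, hbeq.symm⟩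
      obtain ⟨t, ht, -, htw, htu⟩ := chain_up hIJ hq hx hu hup (wD m q x s - 2) H'
      have hts : t = s := by
        by_contra hne
        exact wD_inj hIJ hq hx ht hs hne (by omega)
      subst hts
      rcases htu with h | h
      · omega
      · exact le_of_lt (Fin.lt_def.mp h)
  obtain ⟨u, hufree, huw, hus⟩ := hu
  -- u is plus and x u = 3, hence u.val ≥ I
  have hup : 2 * (x u).val ≤ q := by
    by_contra hup
    obtain ⟨-, -, hminu⟩ := wD_facts hIJ hq hx hufree
    obtain ⟨e1, -, -⟩ := hminu hup
    obtain ⟨-, hb2, hb3⟩ := Xd_facts hIJ hq hx hufree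
    omega
  have hXu : (x u).val = 3 := by
    obtain ⟨-, hplusu, -⟩ := wD_facts hIJ hq hx hufree
    have := (hplusu hup).1
    omega
  -- x u = x ⟨I⟩ + 1, so ¬(u < ⟨I⟩)
  have hxu3 : x u = x (⟨I, hIm⟩ : Fin m) + 1 := by
    obtain ⟨h1, -⟩ := hx
    rw [h1, ← cast_val_eq (by omega) (x u), hXu]
    push_cast; ring
  have hcond5 := hx.2.2.2.2.1
  have hnlt : ¬ (u < (⟨I, hIm⟩ : Fin m)) := fun hlt => hcond5 u _ hlt hxu3
  have : I ≤ u.val := by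
    by_contra h
    exact hnlt (Fin.lt_def.mpr (by simpa using (by omega : u.val < I)))
  omega

end Seven

end ShiFlat

namespace ShiFlat

section Eight

variable {m I J q : ℕ} {x : Fin m → ZMod q} {hIm : I < m} {hJm : J < m}

lemma gbd_mono {s t : Fin m} (h : wD m q x t ≤ wD m q x s) :
    gbd m I J q x t ≤ gbd m I J q x s :=
  Finset.card_le_card (Finset.filter_subset_filter _ (Finset.Ico_subset_Ico le_rfl h))

lemma nogap {s t : Fin m} (h2 : 2 ≤ wD m q x t) (hw : wD m q x t < wD m q x s)
    (hg : gbd m I J q x s ≤ gbd m I J q x t) :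
    ∀ b, wD m q x t ≤ b → b < wD m q x s → b ∈ Occ m I J q x := by
  intro b hb1 hb2
  by_contra hbO
  have hss : ((Finset.Ico 2 (wD m q x t)).filter (fun b => b ∉ Occ m I J q x))
      ⊂ ((Finset.Ico 2 (wD m q x s)).filter (fun b => b ∉ Occ m I J q x)) := by
    constructor
    · exact Finset.filter_subset_filter _ (Finset.Ico_subset_Ico le_rfl (by omega))
    · intro hsub
      have hb : b ∈ ((Finset.Ico 2 (wD m q x s)).filter (fun b => b ∉ Occ m I J q x)) :=
        Finset.mem_filter.mpr ⟨Finset.mem_Ico.mpr ⟨by omega, hb2⟩, hbO⟩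
      have := hsub hb
      have := (Finset.mem_Ico.mp (Finset.mem_filter.mp this).1).2
      omega
  have := Finset.card_lt_card hss
  unfold gbd at hg
  omega

lemma labd_parity (hIJ : I < J) (hq : 2 * m + 12 ≤ q)
    (hx : MemCond m I J q hIm hJm x) {s : Fin m} (hs : Free m I J s) :
    (labd m I J q x s % 2 = 0 ↔ 2 * (x s).val ≤ q) := by
  unfold labd
  by_cases hp : 2 * (x s).val ≤ q
  · rw [if_pos hp]; constructor <;> intro <;> [exact hp; omega]
  · rw [if_neg hp]
    have := gbd_pos_of_minus hIJ hq hx hs hp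
    constructor <;> intro h
    · omega
    · exact absurd h hp

lemma ORD (hIJ : I < J) (hJm' : J < m) (hq : 2 * m + 12 ≤ q)
    (hx : MemCond m I J q hIm hJm x) {s t : Fin m} (hs : Free m I J s) (ht : Free m I J t)
    (hst : t ≠ s) (hlab : labd m I J q x t < labd m I J q x s) :
    wD m q x t < wD m q x s := by
  rcases Nat.lt_trichotomy (wD m q x t) (wD m q x s) with h | h | h
  · exact h
  · exact absurd h (wD_inj hIJ hq hx ht hs hst)
  · -- wD s < wD t; derive a contradiction
    exfalso
    have hg : gbd m I J q x s ≤ gbd m I J q x t := gbd_mono (le_of_lt h)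
    by_cases hgs : gbd m I J q x s < gbd m I J q x t
    · have h1 : labd m I J q x s ≤ 2 * gbd m I J q x s := by
        unfold labd; split <;> omega
      have h2 : 2 * gbd m I J q x t - 1 ≤ labd m I J q x t := by
        unfold labd; split <;> omega
      omega
    · have hgeq : gbd m I J q x t = gbd m I J q x s := by omega
      obtain ⟨hw2s, -, -⟩ := wD_facts hIJ hq hx hs
      have hnog := nogap (I := I) (J := J) hw2s h (by omega)
      by_cases hp : 2 * (x s).val ≤ q
      · -- chain up from s to wD t
        have H : ∀ b, wD m q x s < b → b ≤ wD m q x s + (wD m q x t - wD m q x s)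
            → b ∈ Occ m I J q x := by
          intro b hb1 hb2
          rcases Nat.lt_or_ge b (wD m q x t) with h' | h'
          · exact hnog b (by omega) h'
          · have hb : b = wD m q x t := by omega
            exact mem_Occ.mpr ⟨t, ht, hb.symm⟩
        obtain ⟨u, hu, hup, huw, hsu⟩ := chain_up hIJ hq hx hs hp _ H
        have hut : u = t := by
          by_contra hne
          exact wD_inj hIJ hq hx hu ht hne (by omega)
        subst hut
        have h1 : labd m I J q x s ≤ 2 * gbd m I J q x s := by
          unfold labd; split <;> omega
        have h2 : labd m I J q x u = 2 * gbd m I J q x u := by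
          unfold labd; rw [if_pos hup]
        omega
      · -- s is minus: labd s = 2 gbd s - 1 ≤ labd t
        have hgp := gbd_pos_of_minus hIJ hq hx hs hp
        have h1 : labd m I J q x s = 2 * gbd m I J q x s - 1 := by
          unfold labd; rw [if_neg hp]
        have h2 : 2 * gbd m I J q x t - 1 ≤ labd m I J q x t := by
          unfold labd; split <;> omega
        omega

/-- order agreement for equal labels -/
lemma ORD_eq (hIJ : I < J) (hJm' : J < m) (hq : 2 * m + 12 ≤ q)
    (hx : MemCond m I J q hIm hJm x) {s t : Fin m} (hs : Free m I J s) (ht : Free m I J t)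
    (hst : t ≠ s) (hlab : labd m I J q x t = labd m I J q x s) :
    (2 * (x s).val ≤ q → (t < s ↔ wD m q x t < wD m q x s)) ∧
      (¬ 2 * (x s).val ≤ q → (s < t ↔ wD m q x t < wD m q x s)) := by
  have hpar : (2 * (x t).val ≤ q ↔ 2 * (x s).val ≤ q) := by
    rw [← labd_parity hIJ hq hx ht, ← labd_parity hIJ hq hx hs, hlab]
  have hgeq : gbd m I J q x t = gbd m I J q x s := by
    have hgt := gbd_pos_of_minus hIJ hq hx ht
    have hgs := gbd_pos_of_minus hIJ hq hx hs
    unfold labd at hlab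
    by_cases hp : 2 * (x s).val ≤ q
    · rw [if_pos hp, if_pos (hpar.mpr hp)] at hlab; omega
    · have h1 := hgt (fun h => hp (hpar.mp h))
      have h2 := hgs hp
      rw [if_neg hp, if_neg (fun h => hp (hpar.mp h))] at hlab
      omega
  have main : ∀ (a b : Fin m), Free m I J a → Free m I J b → wD m q x a < wD m q x b →
      gbd m I J q x a = gbd m I J q x b →
      (2 * (x a).val ≤ q → 2 * (x b).val ≤ q → a < b) ∧
      (¬ 2 * (x a).val ≤ q → ¬ 2 * (x b).val ≤ q → b < a) := by
    intro a b ha hb hw hg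
    obtain ⟨hw2a, -, -⟩ := wD_facts hIJ hq hx ha
    constructor
    · intro hpa hpb
      have H : ∀ e, wD m q x a < e → e ≤ wD m q x a + (wD m q x b - wD m q x a)
          → e ∈ Occ m I J q x := by
        intro e he1 he2
        rcases Nat.lt_or_ge e (wD m q x b) with h' | h'
        · exact nogap (I := I) (J := J) hw2a hw (by omega) e (by omega) h'
        · have hb' : e = wD m q x b := by omega
          exact mem_Occ.mpr ⟨b, hb, hb'.symm⟩
      obtain ⟨u, hu, hup, huw, hau⟩ := chain_up hIJ hq hx ha hpa _ H
      have hub : u = b := by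
        by_contra hne
        exact wD_inj hIJ hq hx hu hb hne (by omega)
      subst hub
      rcases hau with h | h
      · exfalso; rw [h] at hw; omega
      · exact h
    · intro hpa hpb
      have H : ∀ e, wD m q x b - (wD m q x b - wD m q x a) ≤ e → e < wD m q x b
          → e ∈ Occ m I J q x := by
        intro e he1 he2
        rcases Nat.lt_or_ge e (wD m q x a) with h' | h'
        · exfalso; omega
        · rcases Nat.eq_or_lt_of_le h' with h'' | h''
          · exact mem_Occ.mpr ⟨a, ha, h''⟩
          · exact nogap (I := I) (J := J) hw2a hw (by omega) e (by omega) he2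
      obtain ⟨u, hu, hup, huw, hbu⟩ := chain_down hIJ hq hx hb hpb (wD m q x b - wD m q x a)
        (by omega) H
      have hua : u = a := by
        by_contra hne
        exact wD_inj hIJ hq hx hu ha hne (by omega)
      subst hua
      rcases hbu with h | h
      · exfalso; rw [h] at hw; omega
      · exact h
  constructor
  · intro hp
    constructor
    · intro hts
      rcases Nat.lt_trichotomy (wD m q x t) (wD m q x s) with h | h | h
      · exact h
      · exact absurd h (wD_inj hIJ hq hx ht hs hst)
      · exfalso
        have := (main s t hs ht h hgeq.symm).1 hp (hpar.mpr hp)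
        exact absurd hts (asymm this)
    · intro hw
      exact (main t s ht hs hw hgeq).1 (hpar.mpr hp) hp
  · intro hp
    constructor
    · intro hts
      rcases Nat.lt_trichotomy (wD m q x t) (wD m q x s) with h | h | h
      · exact h
      · exact absurd h (wD_inj hIJ hq hx ht hs hst)
      · exfalso
        have := (main s t hs ht h hgeq.symm).2 hp (fun h' => hp (hpar.mp h'))
        exact absurd hts (asymm this)
    · intro hw
      exact (main t s ht hs hw hgeq).2 (fun h' => hp (hpar.mp h')) hp

end Eight

end ShiFlat

namespace ShiFlat

section Nine

variable {m I J q : ℕ} {x : Fin m → ZMod q} {hIm : I < m} {hJm : J < m}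

lemma count_below (hIJ : I < J) (hJm' : J < m) (hq : 2 * m + 12 ≤ q)
    (hx : MemCond m I J q hIm hJm x) {s : Fin m} (hs : Free m I J s) :
    (Finset.univ.filter (fun t => Free m I J t ∧ wD m q x t < wD m q x s)).card
      + gbd m I J q x s + 2 = wD m q x s := by
  have hsplit := Finset.card_filter_add_card_filter_not
    (s := Finset.Ico 2 (wD m q x s)) (p := fun b => b ∈ Occ m I J q x)
  have himg : (Finset.Ico 2 (wD m q x s)).filter (fun b => b ∈ Occ m I J q x)
      = (Finset.univ.filter (fun t => Free m I J t ∧ wD m q x t < wD m q x s)).image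
          (wD m q x) := by
    ext b
    simp only [Finset.mem_filter, Finset.mem_Ico, Finset.mem_image, Finset.mem_univ, true_and]
    constructor
    · rintro ⟨⟨hb1, hb2⟩, hbO⟩
      obtain ⟨t, ht, hw⟩ := mem_Occ.mp hbO
      exact ⟨t, ⟨ht, by omega⟩, hw⟩
    · rintro ⟨t, ⟨ht, hw⟩, rfl⟩
      obtain ⟨h2t, -, -⟩ := wD_facts hIJ hq hx ht
      exact ⟨⟨h2t, hw⟩, mem_Occ.mpr ⟨t, ht, rfl⟩⟩
  have hinj : ((Finset.univ.filter
      (fun t => Free m I J t ∧ wD m q x t < wD m q x s)).image (wD m q x)).card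
      = (Finset.univ.filter (fun t => Free m I J t ∧ wD m q x t < wD m q x s)).card := by
    apply Finset.card_image_of_injOn
    intro a ha b hb hab
    simp only [Finset.coe_filter, Finset.mem_univ, true_and, Set.mem_setOf_eq] at ha hb
    by_contra hne
    exact wD_inj hIJ hq hx ha.1 hb.1 hne hab
  obtain ⟨h2s, -, -⟩ := wD_facts hIJ hq hx hs
  rw [himg, hinj] at hsplit
  rw [Nat.card_Ico] at hsplit
  unfold gbd
  omega

lemma pred_to_w (hIJ : I < J) (hJm' : J < m) (hq : 2 * m + 12 ≤ q)
    (hx : MemCond m I J q hIm hJm x) {s t : Fin m} (hs : Free m I J s)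
    (hp : Pred m I J (psi m I J q x) t s) : wD m q x t < wD m q x s := by
  obtain ⟨htf, hkey⟩ := hp
  have hts : t ≠ s := by
    intro h; subst h; omega
  have hlabs : psi m I J q x s = labd m I J q x s := by unfold psi; rw [if_pos hs]
  have hlabt : psi m I J q x t = labd m I J q x t := by unfold psi; rw [if_pos htf]
  have hle : psi m I J q x t ≤ psi m I J q x s := label_le_of_key_lt hkey
  rcases Nat.eq_or_lt_of_le hle with heq | hlt
  · -- equal labels
    rcases (key_lt_same_label heq).mp hkey with ⟨hev, hlt'⟩ | ⟨hod, hlt'⟩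
    · have hplus : 2 * (x s).val ≤ q := by
        rw [hlabs] at hev
        exact (labd_parity hIJ hq hx hs).mp hev
      exact ((ORD_eq hIJ hJm' hq hx hs htf hts (by omega)).1 hplus).mp hlt'
    · have hminus : ¬ 2 * (x s).val ≤ q := by
        rw [hlabs] at hod
        intro h
        exact hod ((labd_parity hIJ hq hx hs).mpr h)
      exact ((ORD_eq hIJ hJm' hq hx hs htf hts (by omega)).2 hminus).mp hlt'
  · exact ORD hIJ hJm' hq hx hs htf hts (by omega)

lemma pred_iff_w (hIJ : I < J) (hJm' : J < m) (hq : 2 * m + 12 ≤ q)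
    (hx : MemCond m I J q hIm hJm x) {s : Fin m} (hs : Free m I J s) (t : Fin m) :
    Pred m I J (psi m I J q x) t s ↔ (Free m I J t ∧ wD m q x t < wD m q x s) := by
  constructor
  · intro hp
    exact ⟨hp.1, pred_to_w hIJ hJm' hq hx hs hp⟩
  · rintro ⟨htf, hw⟩
    have hts : t ≠ s := by
      intro h; subst h; omega
    rcases pred_total (c := psi m I J q x) htf hs hts with h | h
    · exact h
    · have := pred_to_w hIJ hJm' hq hx htf h
      omega

lemma psi_in_BSet (hIJ : I < J) (hJm' : J < m) (hq : 2 * m + 12 ≤ q)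
    (hx : MemCond m I J q hIm hJm x) : ∀ u, psi m I J q x u ∈ BSet m I J q u := by
  intro u
  unfold psi BSet
  by_cases hu : Free m I J u
  · rw [if_pos hu, if_neg (by unfold Free at hu; tauto)]
    have hle := labd_le hIJ hJm' hq hx hu
    by_cases huI : u.val < I
    · rw [if_pos huI]
      have hne := labd_ne_zero hIJ hJm' hq hx hu huI
      exact Finset.mem_Icc.mpr ⟨by omega, by omega⟩
    · rw [if_neg huI]
      exact Finset.mem_range.mpr (by omega)
  · rw [if_neg hu, if_pos (by unfold Free at hu; tauto)]
    exact Finset.mem_singleton_self 0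

lemma vtx_psi (hIJ : I < J) (hJm' : J < m) (hq : 2 * m + 12 ≤ q)
    (hx : MemCond m I J q hIm hJm x) {s : Fin m} (hs : Free m I J s) :
    vtx m I J (psi m I J q x) s = wD m q x s := by
  have hlabs : psi m I J q x s = labd m I J q x s := by unfold psi; rw [if_pos hs]
  have hgb : gb m (psi m I J q x) s = gbd m I J q x s := by
    unfold gb
    rw [hlabs]
    unfold labd
    by_cases hp : 2 * (x s).val ≤ q
    · rw [if_pos hp]; omega
    · rw [if_neg hp]
      have := gbd_pos_of_minus hIJ hq hx hs hp
      omega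
  have hrank : rank m I J (psi m I J q x) s
      = (Finset.univ.filter (fun t => Free m I J t ∧ wD m q x t < wD m q x s)).card := by
    unfold rank
    congr 1
    apply Finset.filter_congr
    intro t _
    exact pred_iff_w hIJ hJm' hq hx hs t
  have hcount := count_below hIJ hJm' hq hx hs
  unfold vtx
  omega

/-- first round trip: `phi (psi x) = x` for `x` satisfying the membership conditions. -/
lemma phi_psi (hIJ : I < J) (hJm' : J < m) (hq : 2 * m + 12 ≤ q)
    (hx : MemCond m I J q hIm hJm x) : phi m I J q (psi m I J q x) = x := by
  funext s
  unfold phi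
  by_cases h1 : s.val = I
  · rw [if_pos h1]
    have : s = (⟨I, hIm⟩ : Fin m) := Fin.ext h1
    rw [this, hx.1]
  · rw [if_neg h1]
    by_cases h2 : s.val = J
    · rw [if_pos h2]
      have : s = (⟨J, hJm⟩ : Fin m) := Fin.ext h2
      rw [this, hx.2.1]
    · rw [if_neg h2]
      have hs : Free m I J s := ⟨h1, h2⟩
      have hlabs : psi m I J q x s = labd m I J q x s := by unfold psi; rw [if_pos hs]
      have hXv : Xval m I J q (psi m I J q x) s = (x s).val := by
        unfold Xval
        rw [vtx_psi hIJ hJm' hq hx hs, hlabs]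
        obtain ⟨h2w, hplus, hminus⟩ := wD_facts hIJ hq hx hs
        by_cases hp : 2 * (x s).val ≤ q
        · rw [if_pos (show labd m I J q x s % 2 = 0 from (labd_parity hIJ hq hx hs).mpr hp)]
          have := (hplus hp).1
          omega
        · rw [if_neg (show ¬ labd m I J q x s % 2 = 0 from
            fun h => hp ((labd_parity hIJ hq hx hs).mp h))]
          have := (hminus hp).1
          omega
      rw [hXv]
      exact cast_val_eq (by omega) (x s)

/-- second round trip: `psi (phi c) = c` for admissible label functions `c`. -/
lemma psi_phi (hIJ : I < J) (hJm' : J < m) (hq : 2 * m + 12 ≤ q) {c : Fin m → ℕ}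
    (hc : ∀ u, c u ∈ BSet m I J q u)
    (hxM : MemCond m I J q (show I < m by omega) hJm' (phi m I J q c)) :
    psi m I J q (phi m I J q c) = c := by
  set x' : Fin m → ZMod q := phi m I J q c with hx'
  funext u
  unfold psi
  by_cases hu : Free m I J u
  swap
  · rw [if_neg hu, mem_BSet_fixed hc hu]
  rw [if_pos hu]
  -- values
  have hval : ∀ t, Free m I J t → (x' t).val = Xval m I J q c t := by
    intro t ht
    have hxt : x' t = ((Xval m I J q c t : ℕ) : ZMod q) := by
      rw [hx']; unfold phi; rw [if_neg ht.1, if_neg ht.2]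
    rw [hxt]
    obtain ⟨-, hb, -, -⟩ := Xval_facts hIJ hJm' hq hc ht
    exact ZMod.val_cast_of_lt (by omega)
  have hplus : ∀ t, Free m I J t → (2 * (x' t).val ≤ q ↔ c t % 2 = 0) := by
    intro t ht
    obtain ⟨-, -, hev, hod⟩ := Xval_facts hIJ hJm' hq hc ht
    rw [hval t ht]
    constructor
    · intro h
      by_contra hodd
      have := (hod hodd).2
      omega
    · intro h
      exact (hev h).2
  have hwd : ∀ t, Free m I J t → wD m q x' t = vtx m I J c t := by
    intro t ht
    obtain ⟨-, -, hev, hod⟩ := Xval_facts hIJ hJm' hq hc ht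
    obtain ⟨hv2, hbe, hbo⟩ := vtx_bounds hIJ hJm' (by omega) hc ht
    unfold wD
    by_cases hp : 2 * (x' t).val ≤ q
    · rw [if_pos hp, hval t ht]
      have hcev : c t % 2 = 0 := (hplus t ht).mp hp
      have := (hev hcev).1
      omega
    · rw [if_neg hp, hval t ht]
      have hcod : c t % 2 ≠ 0 := fun h => hp ((hplus t ht).mpr h)
      have h1 := (hod hcod).1
      have h2 := (hbo hcod).1
      omega
  have hrank : (Finset.univ.filter
      (fun t => Free m I J t ∧ wD m q x' t < wD m q x' u)).card = rank m I J c u := by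
    unfold rank
    congr 1
    apply Finset.filter_congr
    intro t _
    constructor
    · rintro ⟨ht, hw⟩
      rw [hwd t ht, hwd u hu] at hw
      have hts : t ≠ u := by
        intro h; subst h; omega
      rcases pred_total (c := c) ht hu hts with h | h
      · exact h
      · exact absurd (vtx_lt_of_pred h) (by omega)
    · intro hp
      refine ⟨hp.1, ?_⟩
      rw [hwd t hp.1, hwd u hu]
      exact vtx_lt_of_pred hp
  have hgbd : gbd m I J q x' u = gb m c u := by
    have hcount := count_below hIJ hJm' hq hxM hu
    rw [hrank, hwd u hu] at hcount
    unfold vtx at hcount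
    omega
  unfold labd
  by_cases hp : 2 * (x' u).val ≤ q
  · rw [if_pos hp, hgbd]
    have hcev := (hplus u hu).mp hp
    unfold gb
    omega
  · rw [if_neg hp, hgbd]
    have hcod : c u % 2 ≠ 0 := fun h => hp ((hplus u hu).mpr h)
    unfold gb
    omega

end Nine

end ShiFlat

namespace ShiFlat

section Ten

variable {m I J q : ℕ}

lemma card_filter_lt {k : ℕ} (hk : k ≤ m) :
    (Finset.univ.filter (fun s : Fin m => s.val < k)).card = k := by
  have hset : (Finset.univ.filter (fun s : Fin m => s.val < k))
      = (Finset.range k).attachFin (fun a ha => by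
          rw [Finset.mem_range] at ha; omega) := by
    ext s
    simp [Finset.mem_attachFin, Finset.mem_range]
  rw [hset, Finset.card_attachFin, Finset.card_range]

lemma prod_BSet_card (hIJ : I < J) (hJm : J < m) (hq : 2 * m + 12 ≤ q) :
    ∏ s : Fin m, (BSet m I J q s).card = (q - 2 * m) ^ I * (q - 2 * m + 1) ^ (m - I - 2) := by
  have hIm : I < m := by omega
  have hcard : ∀ s : Fin m, (BSet m I J q s).card =
      if s.val = I ∨ s.val = J then 1 else if s.val < I then q - 2 * m else q - 2 * m + 1 := by
    intro s
    unfold BSet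
    by_cases h1 : s.val = I ∨ s.val = J
    · rw [if_pos h1, if_pos h1, Finset.card_singleton]
    · rw [if_neg h1, if_neg h1]
      by_cases h2 : s.val < I
      · rw [if_pos h2, if_pos h2, Nat.card_Icc]
        omega
      · rw [if_neg h2, if_neg h2, Finset.card_range]
  calc ∏ s : Fin m, (BSet m I J q s).card
      = ∏ s : Fin m, (if s.val = I ∨ s.val = J then 1
          else if s.val < I then q - 2 * m else q - 2 * m + 1) :=
        Finset.prod_congr rfl (fun s _ => hcard s)
    _ = (q - 2 * m) ^ I * (q - 2 * m + 1) ^ (m - I - 2) := by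
        rw [← Finset.prod_filter_mul_prod_filter_not Finset.univ (fun s : Fin m => s.val < I)]
        have hA : ∏ s ∈ Finset.univ.filter (fun s : Fin m => s.val < I),
            (if s.val = I ∨ s.val = J then 1
              else if s.val < I then q - 2 * m else q - 2 * m + 1) = (q - 2 * m) ^ I := by
          have hval : ∀ s ∈ Finset.univ.filter (fun s : Fin m => s.val < I),
              (if s.val = I ∨ s.val = J then 1
                else if s.val < I then q - 2 * m else q - 2 * m + 1) = q - 2 * m := by
            intro s hs
            rw [Finset.mem_filter] at hs
            rw [if_neg (by omega), if_pos hs.2]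
          rw [Finset.prod_congr rfl hval, Finset.prod_const, card_filter_lt (by omega)]
        have hB : ∏ s ∈ Finset.univ.filter (fun s : Fin m => ¬ s.val < I),
            (if s.val = I ∨ s.val = J then 1
              else if s.val < I then q - 2 * m else q - 2 * m + 1)
            = (q - 2 * m + 1) ^ (m - I - 2) := by
          rw [← Finset.prod_filter_mul_prod_filter_not
            (Finset.univ.filter (fun s : Fin m => ¬ s.val < I))
            (fun s : Fin m => s.val = I ∨ s.val = J)]
          have hB1 : ∏ s ∈ (Finset.univ.filter (fun s : Fin m => ¬ s.val < I)).filter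
              (fun s : Fin m => s.val = I ∨ s.val = J),
              (if s.val = I ∨ s.val = J then 1
                else if s.val < I then q - 2 * m else q - 2 * m + 1) = 1 := by
            apply Finset.prod_eq_one
            intro s hs
            rw [Finset.mem_filter] at hs
            rw [if_pos hs.2]
          have hB2 : ∏ s ∈ (Finset.univ.filter (fun s : Fin m => ¬ s.val < I)).filter
              (fun s : Fin m => ¬ (s.val = I ∨ s.val = J)),
              (if s.val = I ∨ s.val = J then 1
                else if s.val < I then q - 2 * m else q - 2 * m + 1)
              = (q - 2 * m + 1) ^ (m - I - 2) := by
            have hval : ∀ s ∈ (Finset.univ.filter (fun s : Fin m => ¬ s.val < I)).filter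
                (fun s : Fin m => ¬ (s.val = I ∨ s.val = J)),
                (if s.val = I ∨ s.val = J then 1
                  else if s.val < I then q - 2 * m else q - 2 * m + 1) = q - 2 * m + 1 := by
              intro s hs
              rw [Finset.mem_filter, Finset.mem_filter] at hs
              rw [if_neg hs.2, if_neg hs.1.2]
            rw [Finset.prod_congr rfl hval, Finset.prod_const]
            congr 1
            -- cardinality of the free tokens with index ≥ I
            have h1 : (Finset.univ.filter (fun s : Fin m => s.val < I)).card = I :=
              card_filter_lt (by omega)
            have h2 : ((Finset.univ.filter (fun s : Fin m => ¬ s.val < I)).filter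
                (fun s : Fin m => s.val = I ∨ s.val = J)).card = 2 := by
              have : ((Finset.univ.filter (fun s : Fin m => ¬ s.val < I)).filter
                  (fun s : Fin m => s.val = I ∨ s.val = J))
                  = {(⟨I, hIm⟩ : Fin m), ⟨J, hJm⟩} := by
                ext s
                simp only [Finset.mem_filter, Finset.mem_univ, true_and, Finset.mem_insert,
                  Finset.mem_singleton, Fin.ext_iff]
                constructor
                · rintro ⟨-, h | h⟩ <;> simp [h]
                · rintro (h | h) <;> simp [h] <;> omega
              rw [this, Finset.card_insert_of_notMem (by simp [Fin.ext_iff]; omega),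
                Finset.card_singleton]
            have h3 := Finset.card_filter_add_card_filter_not
              (s := Finset.univ.filter (fun s : Fin m => ¬ s.val < I))
              (p := fun s : Fin m => s.val = I ∨ s.val = J)
            have h4 := Finset.card_filter_add_card_filter_not
              (s := (Finset.univ : Finset (Fin m)))
              (p := fun s : Fin m => s.val < I)
            rw [Finset.card_univ, Fintype.card_fin] at h4
            omega
          rw [hB1, hB2, one_mul]
        rw [hA, hB]

end Ten

end ShiFlat

open ShiFlat

/-- The number of points on the restriction of `B_m ∪ {x_j = -1}` to the flat
`{x_i + x_j = 1, x_j = -1}` (i.e. `x_i = 2, x_j = -1`) avoiding all other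
hyperplanes (indices `1 ≤ i < j ≤ m`, 1-indexed). -/
theorem shi_typeB_flat_xi_eq_two_xj_eq_neg_one (m i j : ℕ) (hm : 2 ≤ m)
    (hi1 : 1 ≤ i) (hij : i < j) (hjm : j ≤ m) :
    ∃ N : ℕ, 0 < N ∧ ∀ q : ℕ, N ≤ q →
      ({x : Fin m → ZMod q |
          x ⟨i - 1, by omega⟩ = 2 ∧ x ⟨j - 1, by omega⟩ = -1 ∧
          (∀ s : Fin m, x s ≠ 0 ∧ x s ≠ 1) ∧
          (∀ s t : Fin m, s ≠ t → x s ≠ x t) ∧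
          (∀ s t : Fin m, s < t → x s ≠ x t + 1) ∧
          (∀ s t : Fin m, s ≠ t →
            ¬((s = ⟨i - 1, by omega⟩ ∧ t = ⟨j - 1, by omega⟩) ∨
              (s = ⟨j - 1, by omega⟩ ∧ t = ⟨i - 1, by omega⟩)) →
            x s ≠ -x t ∧ x s ≠ -x t + 1)}.ncard : ℤ)
        = ((q : ℤ) - 2 * m) ^ (i - 1) * ((q : ℤ) - 2 * m + 1) ^ (m - i - 1) := by
  refine ⟨2 * m + 12, by omega, fun q hq => ?_⟩
  have hIJ : i - 1 < j - 1 := by omega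
  have hJm : j - 1 < m := by omega
  have hIm : i - 1 < m := by omega
  have hq' : 2 * m + 12 ≤ q := hq
  set S : Set (Fin m → ℕ) := ↑(Fintype.piFinset (BSet m (i - 1) (j - 1) q)) with hS
  have hSmem : ∀ c : Fin m → ℕ, c ∈ S ↔ ∀ u, c u ∈ BSet m (i - 1) (j - 1) q u := by
    intro c
    rw [hS, Finset.mem_coe, Fintype.mem_piFinset]
  have hMeq : {x : Fin m → ZMod q |
          x ⟨i - 1, by omega⟩ = 2 ∧ x ⟨j - 1, by omega⟩ = -1 ∧
          (∀ s : Fin m, x s ≠ 0 ∧ x s ≠ 1) ∧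
          (∀ s t : Fin m, s ≠ t → x s ≠ x t) ∧
          (∀ s t : Fin m, s < t → x s ≠ x t + 1) ∧
          (∀ s t : Fin m, s ≠ t →
            ¬((s = ⟨i - 1, by omega⟩ ∧ t = ⟨j - 1, by omega⟩) ∨
              (s = ⟨j - 1, by omega⟩ ∧ t = ⟨i - 1, by omega⟩)) →
            x s ≠ -x t ∧ x s ≠ -x t + 1)}
      = phi m (i - 1) (j - 1) q '' S := by
    ext x
    simp only [Set.mem_setOf_eq, Set.mem_image]
    constructor
    · intro hx
      have hxM : MemCond m (i - 1) (j - 1) q hIm hJm x := hx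
      refine ⟨psi m (i - 1) (j - 1) q x, ?_, phi_psi hIJ hJm hq' hxM⟩
      exact (hSmem _).mpr (psi_in_BSet hIJ hJm hq' hxM)
    · rintro ⟨c, hcS, rfl⟩
      have hc := (hSmem c).mp hcS
      have := phi_mem hIJ hJm hq' hc
      exact this
  have hinj : Set.InjOn (phi m (i - 1) (j - 1) q) S := by
    intro c1 h1 c2 h2 heq
    have hc1 := (hSmem c1).mp h1
    have hc2 := (hSmem c2).mp h2
    have hm1 : MemCond m (i - 1) (j - 1) q (show i - 1 < m by omega) hJm
        (phi m (i - 1) (j - 1) q c1) := phi_mem hIJ hJm hq' hc1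
    have hm2 : MemCond m (i - 1) (j - 1) q (show i - 1 < m by omega) hJm
        (phi m (i - 1) (j - 1) q c2) := phi_mem hIJ hJm hq' hc2
    calc c1 = psi m (i - 1) (j - 1) q (phi m (i - 1) (j - 1) q c1) :=
          (psi_phi (hIm := hIm) hIJ hJm hq' hc1 hm1).symm
      _ = psi m (i - 1) (j - 1) q (phi m (i - 1) (j - 1) q c2) := by rw [heq]
      _ = c2 := psi_phi (hIm := hIm) hIJ hJm hq' hc2 hm2
  rw [hMeq, Set.ncard_image_of_injOn hinj, hS, Set.ncard_coe_finset,
    Fintype.card_piFinset, prod_BSet_card hIJ hJm hq']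
  have hexp : m - (i - 1) - 2 = m - i - 1 := by omega
  rw [hexp]
  have h2m : 2 * m ≤ q := by omega
  push_cast [Nat.cast_sub h2m]
  ring
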